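/- Let T > 0, let M : ℝ^n → (J × n real matrices) be continuous and suppose there is c > 0 with ‖M(x) y‖ ≥ c ‖y‖ for all x, y ∈ ℝ^n. Let Φ : [0,T] × ℝ^n → ℝ be continuous and bounded and let v ∈ ℝ^n. Then lim_{t → T⁻} (T−t)^{−n/2} ∫_{ℝ^n} Φ(t,q) exp(−‖M(q)(q−v)‖²/(2(T−t))) dq = Φ(T,v) ∫_{ℝ^n} exp(−‖M(v) y‖²/2) dy. -/

import Mathlib

/-!
Substituting `q = v + √(T - t) • y` absorbs the factor `(T - t)^(-n/2)` and turns the integrand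
into `Φ(t, v + √(T - t) y) exp(-‖M(v + √(T - t) y) y‖²/2)`. As `t → T⁻` this converges pointwise
to `Φ(T, v) exp(-‖M(v) y‖²/2)`, and the lower bound `‖M(x) y‖ ≥ c‖y‖` dominates it by the
integrable Gaussian `C exp(-c²‖y‖²/2)`, so dominated convergence applies.
-/

open MeasureTheory Matrix

-- `Fin k → ℝ` carries the sup norm, hence the detour through `EuclideanSpace`.
noncomputable def eucNorm {k : ℕ} (v : Fin k → ℝ) : ℝ :=
  ‖(EuclideanSpace.equiv (Fin k) ℝ).symm v‖

open Filter Topology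

lemma eucNorm_nonneg {k : ℕ} (v : Fin k → ℝ) : 0 ≤ eucNorm v := norm_nonneg _

lemma eucNorm_smul {k : ℕ} (r : ℝ) (v : Fin k → ℝ) : eucNorm (r • v) = |r| * eucNorm v := by
  rw [eucNorm, map_smul, norm_smul, Real.norm_eq_abs, eucNorm]

@[fun_prop]
lemma continuous_eucNorm {k : ℕ} : Continuous (eucNorm (k := k)) :=
  (EuclideanSpace.equiv (Fin k) ℝ).symm.continuous.norm

lemma eucNorm_sq {k : ℕ} (v : Fin k → ℝ) : eucNorm v ^ 2 = ∑ i, v i ^ 2 := by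
  rw [eucNorm, EuclideanSpace.norm_eq, Real.sq_sqrt (by positivity)]
  simp [sq_abs]

lemma integrable_exp_neg_mul_eucNorm_sq {k : ℕ} {b : ℝ} (hb : 0 < b) :
    Integrable fun y : Fin k → ℝ => Real.exp (-b * eucNorm y ^ 2) := by
  have h_prod (y : Fin k → ℝ) :
      Real.exp (-b * eucNorm y ^ 2) = ∏ i, Real.exp (-b * y i ^ 2) := by
    rw [eucNorm_sq, Finset.mul_sum, Real.exp_sum]
  simp_rw [h_prod]
  exact Integrable.fintype_prod fun _ => integrable_exp_neg_mul_sq hb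

lemma continuous_exp_neg_eucNorm_mulVec_sq {n J : ℕ}
    {M : (Fin n → ℝ) → Matrix (Fin J) (Fin n) ℝ} (hM : Continuous M) :
    Continuous fun p : (Fin n → ℝ) × (Fin n → ℝ) =>
      Real.exp (-eucNorm (M p.1 *ᵥ p.2) ^ 2 / 2) := by
  fun_prop

lemma abs_mul_exp_neg_eucNorm_mulVec_sq_le {n J : ℕ} {A : Matrix (Fin J) (Fin n) ℝ}
    {y : Fin n → ℝ} {a c C : ℝ} (hc : 0 ≤ c) (hA : c * eucNorm y ≤ eucNorm (A *ᵥ y))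
    (ha : |a| ≤ C) :
    |a * Real.exp (-eucNorm (A *ᵥ y) ^ 2 / 2)| ≤ C * Real.exp (-(c ^ 2 / 2) * eucNorm y ^ 2) := by
  have h_exp : Real.exp (-eucNorm (A *ᵥ y) ^ 2 / 2) ≤ Real.exp (-(c ^ 2 / 2) * eucNorm y ^ 2) := by
    have h_sq := pow_le_pow_left₀ (mul_nonneg hc (eucNorm_nonneg y)) hA 2
    rw [mul_pow] at h_sq
    rw [Real.exp_le_exp]
    linarith
  rw [abs_mul, abs_of_pos (Real.exp_pos _)]
  exact mul_le_mul ha h_exp (Real.exp_pos _).le ((abs_nonneg a).trans ha)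

theorem integral_comp_add_smul {E F : Type*} [NormedAddCommGroup E] [NormedSpace ℝ E]
    [MeasurableSpace E] [BorelSpace E] [FiniteDimensional ℝ E] [NormedAddCommGroup F]
    [NormedSpace ℝ F] (μ : Measure E) [μ.IsAddHaarMeasure] (f : E → F) (v : E) {r : ℝ}
    (hr : 0 ≤ r) :
    ∫ y, f (v + r • y) ∂μ = (r ^ Module.finrank ℝ E)⁻¹ • ∫ q, f q ∂μ := by
  rw [Measure.integral_comp_smul_of_nonneg μ (fun x => f (v + x)) r (hR := hr),
    integral_add_left_eq_self]

lemma rpow_neg_natCast_div_two {s : ℝ} (hs : 0 ≤ s) (n : ℕ) :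
    s ^ (-(n : ℝ) / 2) = (√s ^ n)⁻¹ := by
  rw [neg_div, Real.rpow_neg hs, Real.rpow_div_two_eq_sqrt _ hs, Real.rpow_natCast]

theorem rpow_mul_integral_gaussian_kernel_eq {n J : ℕ} (M : (Fin n → ℝ) → Matrix (Fin J) (Fin n) ℝ)
    (f : (Fin n → ℝ) → ℝ) (v : Fin n → ℝ) {s : ℝ} (hs : 0 < s) :
    s ^ (-(n : ℝ) / 2) * ∫ q, f q * Real.exp (-eucNorm (M q *ᵥ (q - v)) ^ 2 / (2 * s)) =
      ∫ y, f (v + √s • y) * Real.exp (-eucNorm (M (v + √s • y) *ᵥ y) ^ 2 / 2) := by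
  set g : (Fin n → ℝ) → ℝ := fun q => f q * Real.exp (-eucNorm (M q *ᵥ (q - v)) ^ 2 / (2 * s))
  have h_sqrt := Real.sqrt_pos.2 hs
  have h_subst (y : Fin n → ℝ) :
      g (v + √s • y) = f (v + √s • y) * Real.exp (-eucNorm (M (v + √s • y) *ᵥ y) ^ 2 / 2) := by
    simp only [g, add_sub_cancel_left, mulVec_smul, eucNorm_smul, abs_of_pos h_sqrt, mul_pow,
      Real.sq_sqrt hs.le]
    field_simp
  simp_rw [← h_subst]
  rw [integral_comp_add_smul volume g v h_sqrt.le, Module.finrank_fin_fun,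
    rpow_neg_natCast_div_two hs.le, smul_eq_mul]

lemma tendsto_add_sqrt_sub_smul {E : Type*} [AddCommGroup E] [Module ℝ E] [TopologicalSpace E]
    [IsTopologicalAddGroup E] [ContinuousSMul ℝ E] (T : ℝ) (v y : E) :
    Tendsto (fun t : ℝ => v + √(T - t) • y) (𝓝 T) (𝓝 v) := by
  have h : Continuous fun t : ℝ => v + √(T - t) • y := by fun_prop
  simpa using h.tendsto T

theorem tendsto_integral_rescaled_gaussian_kernel {n J : ℕ} {T : ℝ} (hT : 0 < T)
    {M : (Fin n → ℝ) → Matrix (Fin J) (Fin n) ℝ} (hM : Continuous M)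
    {c : ℝ} (hc : 0 < c) (hMc : ∀ x y : Fin n → ℝ, c * eucNorm y ≤ eucNorm (M x *ᵥ y))
    {Φ : ℝ → (Fin n → ℝ) → ℝ}
    (hΦcont : ContinuousOn (fun z : ℝ × (Fin n → ℝ) => Φ z.1 z.2) (Set.Icc 0 T ×ˢ Set.univ))
    {C : ℝ} (hΦbdd : ∀ t ∈ Set.Icc (0 : ℝ) T, ∀ q : Fin n → ℝ, |Φ t q| ≤ C) (v : Fin n → ℝ) :
    Tendsto (fun t => ∫ y, Φ t (v + √(T - t) • y) *
        Real.exp (-eucNorm (M (v + √(T - t) • y) *ᵥ y) ^ 2 / 2))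
      (𝓝[Set.Ioo 0 T] T)
      (𝓝 (Φ T v * ∫ y, Real.exp (-eucNorm (M v *ᵥ y) ^ 2 / 2))) := by
  have h_weight := continuous_exp_neg_eucNorm_mulVec_sq hM
  have h_mem : ∀ t ∈ Set.Ioo 0 T, ∀ q : Fin n → ℝ, (t, q) ∈ Set.Icc 0 T ×ˢ Set.univ :=
    fun t ht _ => ⟨Set.Ioo_subset_Icc_self ht, trivial⟩
  rw [← integral_const_mul]
  refine tendsto_integral_filter_of_dominated_convergence
    (fun y => C * Real.exp (-(c ^ 2 / 2) * eucNorm y ^ 2)) ?_ ?_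
    ((integrable_exp_neg_mul_eucNorm_sq (by positivity)).const_mul C) ?_
  · filter_upwards [self_mem_nhdsWithin] with t ht
    have h_aff : Continuous fun y : Fin n → ℝ => v + √(T - t) • y := by fun_prop
    exact ((hΦcont.comp_continuous (continuous_const.prodMk h_aff) fun y => h_mem t ht _).mul
      (h_weight.comp (h_aff.prodMk continuous_id))).aestronglyMeasurable
  · filter_upwards [self_mem_nhdsWithin] with t ht
    exact Eventually.of_forall fun y =>
      abs_mul_exp_neg_eucNorm_mulVec_sq_le hc.le (hMc _ y) (hΦbdd t (Set.Ioo_subset_Icc_self ht) _)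
  · refine Eventually.of_forall fun y => ?_
    have h_pt := (tendsto_add_sqrt_sub_smul T v y).mono_left
      (nhdsWithin_le_nhds (s := Set.Ioo 0 T))
    have h_pair : Tendsto (fun t => (t, v + √(T - t) • y)) (𝓝[Set.Ioo 0 T] T)
        (𝓝[Set.Icc 0 T ×ˢ Set.univ] (T, v)) :=
      tendsto_nhdsWithin_iff.2 ⟨(tendsto_id.mono_right nhdsWithin_le_nhds).prodMk_nhds h_pt,
        eventually_nhdsWithin_of_forall fun t ht => h_mem t ht _⟩
    have h_Φ : Tendsto (fun t => Φ t (v + √(T - t) • y)) (𝓝[Set.Ioo 0 T] T) (𝓝 (Φ T v)) :=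
      (hΦcont _ ⟨⟨hT.le, le_rfl⟩, trivial⟩).tendsto.comp h_pair
    have h_arg : Tendsto (fun t => (v + √(T - t) • y, y)) (𝓝[Set.Ioo 0 T] T) (𝓝 (v, y)) :=
      h_pt.prodMk_nhds tendsto_const_nhds
    have h_w := (h_weight.tendsto (v, y)).comp h_arg
    exact h_Φ.mul h_w

/-- The dominated-convergence core of the conditioning lemma: as `t → T⁻`,
`(T−t)^{−n/2} ∫ Φ(t,q) exp(−‖M(q)(q−v)‖²/(2(T−t))) dq → Φ(T,v) ∫ exp(−‖M(v) y‖²/2) dy`. -/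
theorem gaussian_concentration_limit (n J : ℕ) (T : ℝ) (hT : 0 < T)
    (M : (Fin n → ℝ) → Matrix (Fin J) (Fin n) ℝ) (hM : Continuous M)
    (c : ℝ) (hc : 0 < c) (hMc : ∀ x y : Fin n → ℝ, c * eucNorm y ≤ eucNorm (M x *ᵥ y))
    (Φ : ℝ → (Fin n → ℝ) → ℝ)
    (hΦcont : ContinuousOn (fun z : ℝ × (Fin n → ℝ) => Φ z.1 z.2)
      (Set.Icc 0 T ×ˢ Set.univ))
    (C : ℝ) (hΦbdd : ∀ t ∈ Set.Icc (0 : ℝ) T, ∀ q : Fin n → ℝ, |Φ t q| ≤ C)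
    (v : Fin n → ℝ) :
    Filter.Tendsto
      (fun t : ℝ => (T - t) ^ (-(n : ℝ) / 2)
        * ∫ q : Fin n → ℝ,
            Φ t q * Real.exp (-eucNorm (M q *ᵥ (q - v)) ^ 2 / (2 * (T - t))))
      (nhdsWithin T (Set.Ioo 0 T))
      (nhds (Φ T v * ∫ y : Fin n → ℝ, Real.exp (-eucNorm (M v *ᵥ y) ^ 2 / 2))) := by
  refine (tendsto_integral_rescaled_gaussian_kernel hT hM hc hMc hΦcont hΦbdd v).congr' ?_
  filter_upwards [self_mem_nhdsWithin] with t ht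
  exact (rpow_mul_integral_gaussian_kernel_eq M (Φ t) v (sub_pos.2 ht.2)).symm
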